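/- arXiv:1006.1464 — 3 statements merged into one kernel-verified Lean document; each statement's English description precedes it below -/
import Mathlib

section
/- For n even, in the polynomial ring ℚ[h, l] with potential V(h,l) = -h^n l + h l^2 + ((n-1)/(2(2n-1))) h^{2n-1}, one has ∂V/∂l = -(h^n - 2hl) and ∂V/∂h = l^2 - h^{n-1} l + ((n-1)/2) h^{n-2}(h^n - 2hl); consequently the Jacobi ideal of V equals the ideal (h^n - 2hl, l^2 - h^{n-1} l). -/
open MvPolynomial

/-!
The constant `(n-1)/(2(2n-1))` is chosen so that `∂V/∂h` differs from `l² - h^{n-1}l` by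
exactly `((n-1)/2) h^{n-2}` times `hⁿ - 2hl = -∂V/∂l`. Hence the two pairs of generators differ by an elementary row operation
and a sign, which does not change the ideal they span.
-/

section

variable {K : Type*} [Field K]

noncomputable def quadricPotential (n : ℕ) : MvPolynomial (Fin 2) K :=
  -(X 0 ^ n * X 1) + X 0 * X 1 ^ 2 + C (((n : K) - 1) / (2 * (2 * n - 1))) * X 0 ^ (2 * n - 1)

theorem pderiv_one_quadricPotential (n : ℕ) :
    pderiv 1 (quadricPotential n : MvPolynomial (Fin 2) K) = -(X 0 ^ n - 2 * X 0 * X 1) := by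
  simp [quadricPotential]
  ring

theorem pderiv_zero_quadricPotential [CharZero K] {n : ℕ} (hn : 2 ≤ n) :
    pderiv 0 (quadricPotential n : MvPolynomial (Fin 2) K) = X 1 ^ 2 - X 0 ^ (n - 1) * X 1
        + C (((n : K) - 1) / 2) * X 0 ^ (n - 2) * (X 0 ^ n - 2 * X 0 * X 1) := by
  obtain ⟨m, rfl⟩ := Nat.exists_eq_add_of_le' hn
  have hcoeff : ((m : K) + 2 - 1) / (2 * (2 * (m + 2) - 1)) * (2 * m + 3) = (m + 2 - 1) / 2 := by
    have hden : (2 * (2 * ((m : K) + 2) - 1)) ≠ 0 := by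
      rw [show (2 * (2 * ((m : K) + 2) - 1)) = ((4 * m + 6 : ℕ) : K) by push_cast; ring]
      exact Nat.cast_ne_zero.2 (by omega)
    rw [div_mul_eq_mul_div, div_eq_div_iff hden two_ne_zero]
    ring
  have hC_coeff : C (((m : K) + 2 - 1) / (2 * (2 * (m + 2) - 1))) *
      (2 * m + 3 : MvPolynomial (Fin 2) K) = C (((m : K) + 2 - 1) / 2) := by
    rw [show (2 * m + 3 : MvPolynomial (Fin 2) K) = C (2 * m + 3 : K) by simp [map_ofNat C],
      ← map_mul, hcoeff]
  have hC_half : 2 * C (((m : K) + 2 - 1) / 2) = (m + 1 : MvPolynomial (Fin 2) K) := by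
    rw [show (m + 1 : MvPolynomial (Fin 2) K) = C ((m : K) + 1) by simp, ← map_ofNat C 2,
      ← map_mul]
    congr 1
    ring
  simp [quadricPotential, show 2 * (m + 2) - 1 = 2 * m + 3 by omega]
  linear_combination X 0 ^ (2 * m + 2) * hC_coeff + X 0 ^ (m + 1) * X 1 * hC_half

end

theorem quadric_potential_even_general (n : ℕ) (hn : 2 ≤ n) :
    let h : MvPolynomial (Fin 2) ℚ := X 0
    let l : MvPolynomial (Fin 2) ℚ := X 1
    let V : MvPolynomial (Fin 2) ℚ :=
      -(h ^ n * l) + h * l ^ 2 + C (((n : ℚ) - 1) / (2 * (2 * n - 1))) * h ^ (2 * n - 1)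
    pderiv 1 V = -(h ^ n - 2 * h * l) ∧
    pderiv 0 V = l ^ 2 - h ^ (n - 1) * l
        + C (((n : ℚ) - 1) / 2) * h ^ (n - 2) * (h ^ n - 2 * h * l) ∧
    Ideal.span {pderiv 0 V, pderiv 1 V} =
      Ideal.span {h ^ n - 2 * h * l, l ^ 2 - h ^ (n - 1) * l} := by
  intro h l V
  have hV : V = quadricPotential n := rfl
  refine ⟨pderiv_one_quadricPotential n, pderiv_zero_quadricPotential hn, ?_⟩
  rw [hV, pderiv_zero_quadricPotential hn, pderiv_one_quadricPotential, Ideal.span_pair_neg,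
    Ideal.span_pair_add_mul_right, Ideal.span_pair_comm]

/-- for even `n`, the potential `V = -hⁿl + hl² + ((n-1)/(2(2n-1)))h^{2n-1}`
in ℚ[h,l] (with `h = X 0`, `l = X 1`) satisfies
`∂V/∂l = -(hⁿ - 2hl)` and `∂V/∂h = l² - h^{n-1}l + ((n-1)/2)h^{n-2}(hⁿ - 2hl)`,
and its Jacobi ideal equals `(hⁿ - 2hl, l² - h^{n-1}l)`. -/
theorem quadric_potential_even (n : ℕ) (hn : 2 ≤ n) (heven : Even n) :
    let h : MvPolynomial (Fin 2) ℚ := X 0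
    let l : MvPolynomial (Fin 2) ℚ := X 1
    let V : MvPolynomial (Fin 2) ℚ :=
      -(h ^ n * l) + h * l ^ 2 + C (((n : ℚ) - 1) / (2 * (2 * n - 1))) * h ^ (2 * n - 1)
    pderiv 1 V = -(h ^ n - 2 * h * l) ∧
    pderiv 0 V = l ^ 2 - h ^ (n - 1) * l
        + C (((n : ℚ) - 1) / 2) * h ^ (n - 2) * (h ^ n - 2 * h * l) ∧
    Ideal.span {pderiv 0 V, pderiv 1 V} =
      Ideal.span {h ^ n - 2 * h * l, l ^ 2 - h ^ (n - 1) * l} :=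
  quadric_potential_even_general n hn
end

section
/- In ℚ[y_1, y_5, y_9], let r_{10} = y_5^2 - 2y_1y_9, r_{14} = 2y_5y_9 - 9y_1^4y_5^2 + 6y_1^9y_5 - y_1^{14}, r_{18} = y_9^2 + 10y_1^3y_5^3 - 9y_1^8y_5^2 + 2y_1^{13}y_5, and let V = -y_5^2y_9 + y_1y_9^2 + 3y_1^4y_5^3 - 3y_1^9y_5^2 + y_1^{14}y_5 - (2/19)y_1^{19}. Then ∂V/∂y_9 = -r_{10}, ∂V/∂y_5 = -r_{14}, and ∂V/∂y_1 = r_{18} + 2y_1^3y_5 r_{10} + 2y_1^4 r_{14}; in particular the Jacobi ideal of V equals (r_{10}, r_{14}, r_{18}). -/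
/-!
The three partial derivatives of `V` are a direct computation. They express the gradient of `V`
through `(r₁₀, r₁₄, r₁₈)` by a unitriangular matrix over `ℚ[y₁, y₅, y₉]` (with `-1`, `-1`, `1` on
the diagonal), and such a change of generators does not change the ideal they span.
-/

open MvPolynomial

@[simp]
theorem Derivation.map_ofNat {R A M : Type*} [CommSemiring R] [CommSemiring A] [AddCommMonoid M]
    [Algebra R A] [Module A M] [Module R M] (D : Derivation R A M) (n : ℕ) [n.AtLeastTwo] :
    D (ofNat(n) : A) = 0 := by
  rw [← Nat.cast_ofNat]
  exact D.map_natCast _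

theorem Submodule.span_insert_add_of_mem {R M : Type*} [Ring R] [AddCommGroup M] [Module R M]
    {x y : M} {s : Set M} (hy : y ∈ span R s) :
    span R (insert (x + y) s) = span R (insert x s) := by
  have le : ∀ {x y : M}, y ∈ span R s → span R (insert (x + y) s) ≤ span R (insert x s) :=
    fun hy ↦ span_le.2 <| Set.insert_subset
      (add_mem (subset_span (Set.mem_insert _ _)) (span_mono (Set.subset_insert _ _) hy))
      ((Set.subset_insert _ _).trans subset_span)
  refine le_antisymm (le hy) ?_
  simpa using le (x := x + y) (neg_mem hy)

theorem Ideal.span_add_mul_add_mul_neg_neg {R : Type*} [CommRing R] (a b c p q : R) :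
    Ideal.span {c + p * a + q * b, -b, -a} = Ideal.span {a, b, c} := by
  have hb : q * b ∈ Ideal.span {-b, -a} :=
    Ideal.mul_mem_left _ _ (neg_mem_iff.1 (Ideal.subset_span (by simp)))
  have ha : p * a ∈ Ideal.span {-b, -a} :=
    Ideal.mul_mem_left _ _ (neg_mem_iff.1 (Ideal.subset_span (by simp)))
  rw [Ideal.span, Submodule.span_insert_add_of_mem hb, Submodule.span_insert_add_of_mem ha,
    ← Ideal.span]
  simp only [Ideal.span_insert, Ideal.span_singleton_neg]
  ac_rfl

/-- potential for `H*(E₇/(E₆×SO(2)), ℚ) = ℚ[y₁,y₅,y₉]/(r₁₀, r₁₄, r₁₈)`.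
Here `y₁ = X 0`, `y₅ = X 1`, `y₉ = X 2`. -/
theorem E7_potential :
    let y1 : MvPolynomial (Fin 3) ℚ := X 0
    let y5 : MvPolynomial (Fin 3) ℚ := X 1
    let y9 : MvPolynomial (Fin 3) ℚ := X 2
    let r10 : MvPolynomial (Fin 3) ℚ := y5 ^ 2 - 2 * y1 * y9
    let r14 : MvPolynomial (Fin 3) ℚ :=
      2 * y5 * y9 - 9 * y1 ^ 4 * y5 ^ 2 + 6 * y1 ^ 9 * y5 - y1 ^ 14
    let r18 : MvPolynomial (Fin 3) ℚ :=
      y9 ^ 2 + 10 * y1 ^ 3 * y5 ^ 3 - 9 * y1 ^ 8 * y5 ^ 2 + 2 * y1 ^ 13 * y5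
    let V : MvPolynomial (Fin 3) ℚ :=
      -(y5 ^ 2 * y9) + y1 * y9 ^ 2 + 3 * y1 ^ 4 * y5 ^ 3 - 3 * y1 ^ 9 * y5 ^ 2
        + y1 ^ 14 * y5 - C (2/19 : ℚ) * y1 ^ 19
    pderiv 2 V = -r10 ∧
    pderiv 1 V = -r14 ∧
    pderiv 0 V = r18 + 2 * y1 ^ 3 * y5 * r10 + 2 * y1 ^ 4 * r14 ∧
    Ideal.span {pderiv 0 V, pderiv 1 V, pderiv 2 V} = Ideal.span {r10, r14, r18} := by
  intro y1 y5 y9 r10 r14 r18 V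
  have h19 : C (2 / 19 : ℚ) * 19 = (2 : MvPolynomial (Fin 3) ℚ) := by
    rw [← map_ofNat C 19, ← C_mul, ← map_ofNat C 2]
    norm_num
  have h2 : pderiv 2 V = -r10 := by
    simp [V, r10, y1, y5, y9, pderiv_X, Derivation.leibniz_pow]
    ring
  have h1 : pderiv 1 V = -r14 := by
    simp [V, r14, y1, y5, y9, pderiv_X, Derivation.leibniz_pow]
    ring
  have h0 : pderiv 0 V = r18 + 2 * y1 ^ 3 * y5 * r10 + 2 * y1 ^ 4 * r14 := by
    simp [V, r10, r14, r18, y1, y5, y9, pderiv_X, Derivation.leibniz_pow]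
    linear_combination (-X 0 ^ 18 : MvPolynomial (Fin 3) ℚ) * h19
  refine ⟨h2, h1, h0, ?_⟩
  rw [h0, h1, h2]
  exact Ideal.span_add_mul_add_mul_neg_neg r10 r14 r18 _ _
end

section
/- Let y_1,...,y_n be pairwise distinct complex numbers, k ≤ n, and let f be a symmetric polynomial in k variables with deg f ≤ k(n-k). Set g = (1/k!)·f(t_1,...,t_k)·∏_{1≤i<j≤k}(t_i - t_j)^2. Then Σ_{S} f(y_S)/∏_{i∈S,j∉S}(y_i - y_j) equals, up to sign, the coefficient of the monomial t_1^{n-1}···t_k^{n-1} in g, where the sum is over k-element subsets S of {1,...,n} and y_S denotes the corresponding tuple of y-values. -/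
/-!
By Lasoń's coefficient formula (a form of the Combinatorial Nullstellensatz), if
`deg g ≤ ∑ i, (|A i| - 1)` then the coefficient of `∏ i, t i ^ (|A i| - 1)` in `g` is
`∑ x ∈ ∏ A i, g x / ∏ i, ∏ b ∈ (A i).erase (x i), (x i - b)`; on a monomial the sum factors
into one-variable sums, which are coefficients of Lagrange interpolants.

Take every `A i = {y₁, …, yₙ}`. The discriminant `∏_{i<j} (tᵢ - tⱼ)²` dividing `g` kills
the points with a repeated coordinate. The others are the orderings `y_S ∘ τ` of the
`k`-subsets `S`; since `g` is symmetric they all contribute the same term, so the `k!`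
cancels. At `y_S` the denominator splits into the factors inside `S`, which give `±` the
discriminant of `y_S` and cancel it, and `∏_{i ∈ S, j ∉ S} (yᵢ - yⱼ)`.
-/

open MvPolynomial Finset

theorem exists_lt_of_sum_le_of_ne {σ : Type*} [Fintype σ] {d e : σ → ℕ}
    (hsum : ∑ i, d i ≤ ∑ i, e i) (hne : d ≠ e) : ∃ i, d i < e i := by
  by_contra! hle
  obtain ⟨j, hj⟩ := Function.ne_iff.mp hne
  have := sum_lt_sum (fun i _ => hle i) ⟨j, mem_univ j, lt_of_le_of_ne (hle j) hj.symm⟩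
  omega

namespace Lagrange

variable {K ι : Type*} [Field K] [DecidableEq ι]

theorem sum_pow_div_prod_sub {s : Finset ι} {v : ι → K} (hvs : Set.InjOn v s) {m : ℕ}
    (hm : m < #s) :
    ∑ i ∈ s, v i ^ m / ∏ j ∈ s.erase i, (v i - v j) = if m = #s - 1 then 1 else 0 := by
  have hdeg : (Polynomial.X ^ m : Polynomial K).degree < #s := by
    rw [Polynomial.degree_X_pow]; exact_mod_cast hm
  simpa [Polynomial.coeff_X_pow, eq_comm] using (coeff_eq_sum hvs hdeg).symm

end Lagrange

section Nullstellensatz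

variable {K σ ι : Type*} [Field K] [Fintype σ] [DecidableEq σ] [DecidableEq ι]

theorem sum_piFinset_prod_pow_div_prod_sub {s : σ → Finset ι} {v : ι → K}
    (hvs : ∀ i, Set.InjOn v (s i)) (hs : ∀ i, (s i).Nonempty) {d : σ → ℕ}
    (hd : ∑ i, d i ≤ ∑ i, (#(s i) - 1)) :
    ∑ a ∈ Fintype.piFinset s,
        (∏ i, v (a i) ^ d i) / ∏ i, ∏ b ∈ (s i).erase (a i), (v (a i) - v b) =
      if d = fun i => #(s i) - 1 then 1 else 0 := by
  simp_rw [← prod_div_distrib]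
  rw [← prod_univ_sum s fun i c => v c ^ d i / ∏ b ∈ (s i).erase c, (v c - v b)]
  split_ifs with h
  · subst h
    refine prod_eq_one fun i _ => ?_
    rw [Lagrange.sum_pow_div_prod_sub (hvs i) (Nat.sub_lt (hs i).card_pos one_pos), if_pos rfl]
  · obtain ⟨i, hi⟩ := exists_lt_of_sum_le_of_ne hd h
    refine prod_eq_zero (mem_univ i) ?_
    rw [Lagrange.sum_pow_div_prod_sub (hvs i) (by omega), if_neg hi.ne]

theorem MvPolynomial.coeff_eq_sum_piFinset {s : σ → Finset ι} {v : ι → K}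
    (hvs : ∀ i, Set.InjOn v (s i)) (hs : ∀ i, (s i).Nonempty) {g : MvPolynomial σ K}
    (hg : g.totalDegree ≤ ∑ i, (#(s i) - 1)) :
    g.coeff (Finsupp.equivFunOnFinite.symm fun i => #(s i) - 1) =
      ∑ a ∈ Fintype.piFinset s,
        eval (v ∘ a) g / ∏ i, ∏ b ∈ (s i).erase (a i), (v (a i) - v b) := by
  set D : σ →₀ ℕ := Finsupp.equivFunOnFinite.symm fun i => #(s i) - 1
  have hmonomial : ∀ d ∈ g.support,
      ∑ a ∈ Fintype.piFinset s, (∏ i, v (a i) ^ d i) /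
        ∏ i, ∏ b ∈ (s i).erase (a i), (v (a i) - v b) = if d = D then 1 else 0 := by
    intro d hd
    have hdeg : ∑ i, d i ≤ ∑ i, (#(s i) - 1) := by
      simpa [Finsupp.sum_fintype] using (le_totalDegree hd).trans hg
    rw [sum_piFinset_prod_pow_div_prod_sub hvs hs hdeg]
    simp only [D, Equiv.eq_symm_apply]
    rfl
  simp_rw [eval_eq', Function.comp_apply, sum_div, mul_div_assoc]
  rw [sum_comm, sum_congr rfl fun d hd => by rw [← mul_sum, hmonomial d hd]]
  simp

end Nullstellensatz

section Vandermonde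

variable {R : Type*} [CommRing R] {k : ℕ}

theorem Matrix.det_vandermonde_sq (p : Fin k → R) :
    (Matrix.vandermonde p).det ^ 2 = ∏ i : Fin k, ∏ j ∈ Ioi i, (p i - p j) ^ 2 := by
  simp_rw [Matrix.det_vandermonde, ← prod_pow]
  exact prod_congr rfl fun i _ => prod_congr rfl fun j _ => by ring

theorem prod_Ioi_sub_sq_comp_perm (p : Fin k → R) (σ : Equiv.Perm (Fin k)) :
    ∏ i : Fin k, ∏ j ∈ Ioi i, (p (σ i) - p (σ j)) ^ 2 =
      ∏ i : Fin k, ∏ j ∈ Ioi i, (p i - p j) ^ 2 := by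
  have hvdm : Matrix.vandermonde (fun i => p (σ i)) = (Matrix.vandermonde p).submatrix σ id := by
    ext i j; simp
  rw [← Matrix.det_vandermonde_sq (fun i => p (σ i)), ← Matrix.det_vandermonde_sq p, hvdm,
    Matrix.det_permute, mul_pow, ← Int.cast_pow, ← Units.val_pow_eq_pow_val, Int.units_sq,
    Units.val_one, Int.cast_one, one_mul]

theorem prod_erase_sub_eq_neg_one_pow_mul (p : Fin k → R) :
    ∏ i, ∏ j ∈ univ.erase i, (p i - p j) =
      (-1) ^ (∑ i : Fin k, #(Ioi i)) * ∏ i : Fin k, ∏ j ∈ Ioi i, (p i - p j) ^ 2 := by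
  have hsplit : ∀ i : Fin k, univ.erase i = (Ioi i).disjUnion (Iio i) (disjoint_Ioi_Iio i) := by
    intro i; ext j; simp; omega
  have hswap :
      ∏ i : Fin k, ∏ j ∈ Iio i, (p i - p j) = ∏ i : Fin k, ∏ j ∈ Ioi i, (p j - p i) :=
    prod_comm' fun i j => by simp [and_comm]
  have hpair : ∀ i : Fin k, (∏ j ∈ Ioi i, (p i - p j)) * ∏ j ∈ Ioi i, (p j - p i) =
      (-1) ^ #(Ioi i) * ∏ j ∈ Ioi i, (p i - p j) ^ 2 := fun i => by
    rw [← prod_mul_distrib, ← prod_const, ← prod_mul_distrib]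
    exact prod_congr rfl fun j _ => by ring
  simp_rw [hsplit, prod_disjUnion, prod_mul_distrib, hswap]
  rw [← prod_mul_distrib]
  simp_rw [hpair, prod_mul_distrib, prod_pow_eq_pow_sum]

theorem Fin.two_mul_sum_card_Ioi : 2 * ∑ i : Fin k, #(Ioi i) = k * (k - 1) := by
  simp_rw [Fin.card_Ioi]
  rw [Fin.sum_univ_eq_sum_range (fun j => k - 1 - j) k,
    sum_range_reflect (fun j => j) k, mul_comm, sum_range_id_mul_two]

end Vandermonde

namespace MvPolynomial

variable (k : ℕ) (R : Type*) [CommRing R]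

noncomputable def discr : MvPolynomial (Fin k) R :=
  ∏ i : Fin k, ∏ j ∈ Ioi i, (X i - X j) ^ 2

variable {k R}

theorem eval_discr (p : Fin k → R) :
    eval p (discr k R) = ∏ i : Fin k, ∏ j ∈ Ioi i, (p i - p j) ^ 2 := by
  simp [discr]

theorem eval_discr_ne_zero_iff [IsDomain R] {p : Fin k → R} :
    eval p (discr k R) ≠ 0 ↔ Function.Injective p := by
  rw [eval_discr, ← Matrix.det_vandermonde_sq, pow_ne_zero_iff two_ne_zero,
    Matrix.det_vandermonde_ne_zero_iff]

theorem eval_mul_discr_of_not_injective [IsDomain R] {p : Fin k → R}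
    (hp : ¬Function.Injective p) (φ : MvPolynomial (Fin k) R) : eval p (φ * discr k R) = 0 := by
  rw [eval_mul, not_ne_iff.mp (mt eval_discr_ne_zero_iff.mp hp), mul_zero]

theorem discr_isSymmetric : (discr k R).IsSymmetric := fun σ => by
  simpa [discr] using prod_Ioi_sub_sq_comp_perm (X : Fin k → MvPolynomial (Fin k) R) σ

theorem totalDegree_discr_le : (discr k R).totalDegree ≤ k * (k - 1) := by
  rw [← Fin.two_mul_sum_card_Ioi, mul_sum]
  refine (totalDegree_finsetProd _ _).trans (sum_le_sum fun i _ => ?_)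
  refine (totalDegree_finsetProd _ _).trans ?_
  rw [mul_comm, ← smul_eq_mul, ← sum_const]
  refine sum_le_sum fun j _ => (totalDegree_pow _ _).trans ?_
  have hX : ∀ l : Fin k, (X l : MvPolynomial (Fin k) R).totalDegree ≤ 1 := fun l =>
    (totalDegree_monomial_le _ _).trans_eq (by simp)
  have := (totalDegree_sub (X i : MvPolynomial (Fin k) R) (X j)).trans (max_le (hX i) (hX j))
  omega

theorem totalDegree_C_mul_mul_discr_le {n : ℕ} (hk : k ≤ n) (c : R) {f : MvPolynomial (Fin k) R}
    (hf : f.totalDegree ≤ k * (n - k)) : (C c * f * discr k R).totalDegree ≤ k * (n - 1) := by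
  have hCf : (C c * f).totalDegree ≤ k * (n - k) :=
    (totalDegree_mul _ _).trans (by rw [totalDegree_C, zero_add]; exact hf)
  refine (totalDegree_mul _ _).trans ((add_le_add hCf totalDegree_discr_le).trans_eq ?_)
  rcases Nat.eq_zero_or_pos k with rfl | hk0
  · simp
  · rw [← Nat.mul_add]; congr 1; omega

end MvPolynomial

theorem Finset.orderEmbOfFin_image_univ_eq_comp_sort {α : Type*} [Fintype α] [LinearOrder α]
    {k : ℕ} {a : Fin k → α} (ha : Function.Injective a) (h : #(univ.image a) = k) :
    (univ.image a).orderEmbOfFin h = a ∘ Tuple.sort a := by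
  symm
  refine orderEmbOfFin_unique h (fun x => mem_image_of_mem a (mem_univ _)) ?_
  exact (Tuple.monotone_sort a).strictMono_of_injective (ha.comp (Tuple.sort a).injective)

theorem sum_eq_sum_powersetCard_sum_perm {α M : Type*} [Fintype α] [LinearOrder α]
    [AddCommMonoid M] {k : ℕ} {F : (Fin k → α) → M}
    (hF : ∀ a, ¬Function.Injective a → F a = 0) :
    ∑ a, F a = ∑ S ∈ (univ.powersetCard k).attach, ∑ σ : Equiv.Perm (Fin k),
      F (S.1.orderEmbOfFin (mem_powersetCard.mp S.2).2 ∘ σ) := by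
  rw [← sum_product']
  symm
  refine sum_bij_ne_zero (fun z _ _ => z.1.1.orderEmbOfFin (mem_powersetCard.mp z.1.2).2 ∘ z.2)
    (fun _ _ _ => mem_univ _) ?_ ?_ (fun _ _ _ => rfl)
  · rintro ⟨⟨S, hS⟩, σ⟩ - - ⟨⟨T, hT⟩, τ⟩ - - h
    have hST : S = T := by
      have := congrArg Set.range h
      simp only [Set.range_comp, Equiv.range_eq_univ, Set.image_univ,
        range_orderEmbOfFin, coe_inj] at this
      exact this
    subst hST
    simp only [Prod.mk.injEq, true_and]
    exact Equiv.ext fun x => (S.orderEmbOfFin _).injective (congrFun h x)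
  · intro a _ ha
    have hinj : Function.Injective a := by
      by_contra h; exact ha (hF a h)
    have hcard : #(univ.image a) = k := by
      rw [card_image_of_injective _ hinj, card_univ, Fintype.card_fin]
    have hsort : (univ.image a).orderEmbOfFin hcard ∘ ⇑(Tuple.sort a)⁻¹ = a := by
      rw [orderEmbOfFin_image_univ_eq_comp_sort hinj hcard]
      ext x; simp
    exact ⟨(⟨univ.image a, mem_powersetCard.mpr ⟨subset_univ _, hcard⟩⟩, (Tuple.sort a)⁻¹),
      mem_product.mpr ⟨mem_attach _ _, mem_univ _⟩,
      by simpa only [hsort] using ha, hsort⟩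

theorem Finset.prod_prod_erase_eq_mul_prod_compl {α M : Type*} [Fintype α] [DecidableEq α]
    [CommMonoid M] (S : Finset α) (F : α → α → M) :
    ∏ a ∈ S, ∏ b ∈ univ.erase a, F a b =
      (∏ a ∈ S, ∏ b ∈ S.erase a, F a b) * ∏ a ∈ S, ∏ b ∈ Sᶜ, F a b := by
  rw [← prod_mul_distrib]
  refine prod_congr rfl fun a ha => ?_
  rw [← prod_union (disjoint_compl_right.mono_left (erase_subset a S))]
  congr 1
  ext b
  by_cases hb : b ∈ S
  · simp [hb]
  · simpa [hb] using (ne_of_mem_of_not_mem ha hb).symm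

section Localization

variable {K ι : Type*} [Field K] [Fintype ι] [DecidableEq ι] {y : ι → K}

theorem eval_div_prod_erase_comp_perm {σ : Type*} [Fintype σ] {g : MvPolynomial σ K}
    (hg : g.IsSymmetric) (a : σ → ι) (τ : Equiv.Perm σ) :
    eval (y ∘ (a ∘ τ)) g / ∏ i, ∏ b ∈ univ.erase ((a ∘ τ) i), (y ((a ∘ τ) i) - y b) =
      eval (y ∘ a) g / ∏ i, ∏ b ∈ univ.erase (a i), (y (a i) - y b) := by
  simp only [Function.comp_apply]
  rw [← Function.comp_assoc, ← eval_rename, hg τ,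
    Equiv.prod_comp τ fun i => ∏ b ∈ univ.erase (a i), (y (a i) - y b)]

theorem factorial_mul_eval_div_prod_erase [CharZero K] (hy : Function.Injective y) {k : ℕ}
    (f : MvPolynomial (Fin k) K) {e : Fin k → ι} (he : Function.Injective e) :
    (k.factorial : K) * (eval (y ∘ e) (C (1 / (k.factorial : K)) * f * discr k K) /
        ∏ i, ∏ b ∈ univ.erase (e i), (y (e i) - y b)) =
      (-1) ^ (∑ i : Fin k, #(Ioi i)) *
        (eval (y ∘ e) f / ∏ a ∈ univ.image e, ∏ b ∈ (univ.image e)ᶜ, (y a - y b)) := by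
  have hden : ∏ i, ∏ b ∈ univ.erase (e i), (y (e i) - y b) =
      (-1) ^ (∑ i : Fin k, #(Ioi i)) * eval (y ∘ e) (discr k K) *
        ∏ a ∈ univ.image e, ∏ b ∈ (univ.image e)ᶜ, (y a - y b) := by
    rw [← prod_image he.injOn (f := fun a => ∏ b ∈ univ.erase a, (y a - y b)),
      prod_prod_erase_eq_mul_prod_compl, prod_image he.injOn, eval_discr,
      ← prod_erase_sub_eq_neg_one_pow_mul]
    congr 1
    refine prod_congr rfl fun i _ => ?_
    rw [← image_erase he, prod_image he.injOn]
    rfl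
  have hdiscr : eval (y ∘ e) (discr k K) ≠ 0 := eval_discr_ne_zero_iff.mpr (hy.comp he)
  have hfact : (k.factorial : K) ≠ 0 := Nat.cast_ne_zero.mpr k.factorial_ne_zero
  rw [hden, eval_mul, eval_mul, eval_C]
  field_simp
  rw [← pow_mul, Even.neg_one_pow ⟨_, mul_two _⟩, mul_one]

theorem sum_perm_eval_div_prod_erase [CharZero K] (hy : Function.Injective y) {k : ℕ}
    {f : MvPolynomial (Fin k) K} (hf : f.IsSymmetric) {e : Fin k → ι}
    (he : Function.Injective e) :
    ∑ τ : Equiv.Perm (Fin k), eval (y ∘ (e ∘ τ)) (C (1 / (k.factorial : K)) * f * discr k K) /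
        ∏ i, ∏ b ∈ univ.erase ((e ∘ τ) i), (y ((e ∘ τ) i) - y b) =
      (-1) ^ (∑ i : Fin k, #(Ioi i)) *
        (eval (y ∘ e) f / ∏ a ∈ univ.image e, ∏ b ∈ (univ.image e)ᶜ, (y a - y b)) := by
  simp only [eval_div_prod_erase_comp_perm (((IsSymmetric.C _).mul hf).mul discr_isSymmetric)]
  rw [sum_const, card_univ, Fintype.card_perm, Fintype.card_fin, nsmul_eq_mul,
    factorial_mul_eval_div_prod_erase hy f he]

end Localization

/-- F. Petrov: for pairwise distinct `y₁,…,yₙ ∈ ℂ`, `k ≤ n` and a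
symmetric polynomial `f` in `k` variables with `deg f ≤ k(n-k)`, setting
`g = (1/k!)·f·∏_{i<j}(tᵢ-tⱼ)²`, the localization sum
`∑_S f(y_S)/∏_{i∈S,j∉S}(yᵢ-yⱼ)` equals, up to sign, the coefficient of the
monomial `t₁^{n-1}⋯t_k^{n-1}` in `g`. -/
theorem equivariant_pairing_coeff (n k : ℕ) (hk : k ≤ n) (y : Fin n → ℂ)
    (hy : Function.Injective y) (f : MvPolynomial (Fin k) ℂ)
    (hf : f.IsSymmetric) (hdeg : f.totalDegree ≤ k * (n - k)) :
    let g : MvPolynomial (Fin k) ℂ :=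
      C ((1 : ℂ) / (Nat.factorial k)) * f *
        ∏ i : Fin k, ∏ j ∈ Finset.Ioi i, (X i - X j) ^ 2
    ∃ ε : ℂ, (ε = 1 ∨ ε = -1) ∧
      ∑ S ∈ (Finset.univ.powersetCard k).attach,
        MvPolynomial.eval
            (fun i => y (S.1.orderEmbOfFin (Finset.mem_powersetCard.mp S.2).2 i)) f /
          ∏ i ∈ S.1, ∏ j ∈ S.1ᶜ, (y i - y j) =
      ε * MvPolynomial.coeff (Finsupp.equivFunOnFinite.symm fun _ : Fin k => n - 1) g := by
  intro g
  rw [show g = C (1 / (k.factorial : ℂ)) * f * discr k ℂ from rfl]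
  refine ⟨(-1) ^ ∑ i : Fin k, #(Ioi i), neg_one_pow_eq_or ℂ _, ?_⟩
  have hcoeff := coeff_eq_sum_piFinset (s := fun _ : Fin k => (univ : Finset (Fin n)))
    (fun _ => hy.injOn) (fun i => ⟨⟨i, i.2.trans_le hk⟩, mem_univ _⟩)
    (by simpa only [sum_const, card_univ, Fintype.card_fin, smul_eq_mul] using
      totalDegree_C_mul_mul_discr_le hk (1 / (k.factorial : ℂ)) hdeg)
  simp only [card_univ, Fintype.card_fin, Fintype.piFinset_univ] at hcoeff
  rw [hcoeff, sum_eq_sum_powersetCard_sum_perm fun a ha => by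
      rw [eval_mul_discr_of_not_injective (p := y ∘ a) (fun h => ha h.of_comp), zero_div],
    mul_sum]
  refine sum_congr rfl fun S _ => ?_
  rw [sum_perm_eval_div_prod_erase hy hf (S.1.orderEmbOfFin _).injective,
    image_orderEmbOfFin_univ, ← mul_assoc, ← pow_add, Even.neg_one_pow ⟨_, rfl⟩, one_mul]
  rfl
end
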